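/- Let D ≥ 3 and let π^{aIJ} : ℝ^{D} → ℝ (a ∈ {1,…,D}, I, J ∈ {1,…,D+1}) be continuous functions antisymmetric in I, J. For x ∈ ℝ^{D}, a continuously differentiable map S : (−1/2,1/2)^{D−1} → ℝ^{D} with S(0) = x, fixed I, J, and ε > 0, define the flux π^{IJ}(S_ε) := ∫_{(−ε/2,ε/2)^{D−1}} Σ ε_{a a₁…a_{D−1}} (∂S^{a₁}/∂u₁)(u) ⋯ (∂S^{a_{D−1}}/∂u_{D−1})(u) π^{aIJ}(S(u)) du. Then the following are equivalent: (i) for all x ∈ ℝ^{D}, all a, b ∈ {1,…,D} and all tuples M₁ < ⋯ < M_{D−3} in {1,…,D+1}: Σ_{I,J,K,L} ε_{I J K L M₁…M_{D−3}} π^{aIJ}(x) π^{bKL}(x) = 0; (ii) for all x, all tuples M₁ < ⋯ < M_{D−3}, and all pairs S, S' of continuously differentiable surfaces as above with S(0) = S'(0) = x: lim_{ε, ε' → 0⁺} ε^{1−D} ε'^{1−D} Σ_{I,J,K,L} ε_{I J K L M₁…M_{D−3}} π^{IJ}(S_ε) π^{KL}(S'_{ε'}) = 0. -/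

import Mathlib

open MeasureTheory Filter

/-- The Levi-Civita symbol `ε_{f(1) … f(n)}` on `n` indices: the sign of the permutation
`(f(1),…,f(n))` of `(1,…,n)`, and `0` if any two indices coincide. -/
noncomputable def eps {n : ℕ} (f : Fin n → Fin n) : ℤ :=
  if h : Function.Bijective f then (Equiv.Perm.sign (Equiv.ofBijective f h) : ℤ) else 0

/-- The combined internal index tuple `(I, J, K, L, M₁, …, M_d)` (with `d + 4` slots). -/
def idx {d : ℕ} (I J K L : Fin (d + 4)) (M : Fin d → Fin (d + 4)) :
    Fin (d + 4) → Fin (d + 4) := fun i =>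
  if h : (i : ℕ) < 4 then ![I, J, K, L] ⟨(i : ℕ), h⟩
  else M ⟨(i : ℕ) - 4, by have := i.isLt; omega⟩

/-- The parameter cube `(−1/2, 1/2)^{D−1}` (with `D = d + 3`). -/
def cube (d : ℕ) : Set (Fin (d + 2) → ℝ) :=
  Set.univ.pi fun _ : Fin (d + 2) => Set.Ioo (-(1 / 2) : ℝ) (1 / 2)

/-- The electric flux `π^{IJ}(S_ε)` of the field `π^{aIJ}` through the surface
`S : (−1/2,1/2)^{D−1} → ℝ^D` (with derivative field `dS`) shrunk by `ε`,
`π^{IJ}(S_ε) = ∫_{(−ε/2,ε/2)^{D−1}} Σ ε_{a a₁…a_{D−1}} ∂₁S^{a₁} ⋯ ∂_{D−1}S^{a_{D−1}}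
π^{aIJ}(S(u)) du`, where `D = d + 3`. -/
noncomputable def flux (d : ℕ)
    (π : Fin (d + 3) → Fin (d + 4) → Fin (d + 4) → (Fin (d + 3) → ℝ) → ℝ)
    (S : (Fin (d + 2) → ℝ) → Fin (d + 3) → ℝ)
    (dS : (Fin (d + 2) → ℝ) → ((Fin (d + 2) → ℝ) →L[ℝ] (Fin (d + 3) → ℝ)))
    (I J : Fin (d + 4)) (ε : ℝ) : ℝ :=
  ∫ u in Set.univ.pi fun _ : Fin (d + 2) => Set.Ioo (-(ε / 2)) (ε / 2),
    ∑ a : Fin (d + 3), ∑ g : Fin (d + 2) → Fin (d + 3),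
      (eps (Fin.cons a g) : ℝ) * (∏ i : Fin (d + 2), dS u (Pi.single i 1) (g i)) *
        π a I J (S u)

/-!
Rescaled by `ε^{1−D}`, the flux through `S_ε` is the average of a continuous density over a
cube shrinking to `0`, so it converges to `n_a π^{aIJ}(x)`, where `n` is the normal of `S` at `x`.
As the simplicity contraction is bilinear, the rescaled smeared constraint therefore converges to
`Σ_{a,b} n_a n'_b` times the pointwise constraint for `(a, b)`, which gives (i) ⇒ (ii).
Conversely, the coordinate hyperplane through `x` orthogonal to `e_a` has normal `±e_a`, so
taking such hyperplanes for `S` and `S'` isolates each pointwise constraint.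
-/

open Set Topology

theorem tendsto_inv_pow_smul_setIntegral_pi_Ioo {E : Type*} [NormedAddCommGroup E]
    [NormedSpace ℝ E] [CompleteSpace E] {n : ℕ} {f : (Fin n → ℝ) → E}
    (hf : ContinuousAt f 0) (hfm : StronglyMeasurableAtFilter f (𝓝 0)) :
    Tendsto (fun ε : ℝ => (ε ^ n)⁻¹ • ∫ u in univ.pi fun _ : Fin n => Ioo (-(ε / 2)) (ε / 2), f u)
      (𝓝[>] 0) (𝓝 (f 0)) := by
  have hsmall : Tendsto (fun ε : ℝ => univ.pi fun _ : Fin n => Ioo (-(ε / 2)) (ε / 2))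
      (𝓝[>] 0) (𝓝 0).smallSets := by
    refine tendsto_smallSets_iff.2 fun t ht => ?_
    obtain ⟨r, hr, hrt⟩ := Metric.mem_nhds_iff.1 ht
    filter_upwards [Ioo_mem_nhdsGT hr] with ε hε
    rw [ball_pi _ hr] at hrt
    refine (Set.pi_mono fun _ _ => ?_).trans hrt
    rw [Pi.zero_apply, Real.ball_eq_Ioo]
    exact Ioo_subset_Ioo (by linarith [hε.1, hε.2]) (by linarith [hε.1, hε.2])
  have hvol : (fun ε : ℝ => volume.real (univ.pi fun _ : Fin n => Ioo (-(ε / 2)) (ε / 2)))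
      =ᶠ[𝓝[>] 0] fun ε => ε ^ n := by
    filter_upwards [self_mem_nhdsWithin] with ε (hε : 0 < ε)
    rw [measureReal_def, Real.volume_pi_Ioo_toReal fun _ => by linarith]
    simp
  have hrem := (hf.integral_sub_linear_isLittleO_ae hfm hsmall _ hvol).tendsto_inv_smul_nhds_zero
  refine (hrem.add_const (f 0)).congr' ?_ |>.trans (by rw [zero_add])
  filter_upwards [self_mem_nhdsWithin] with ε (hε : 0 < ε)
  rw [smul_sub, smul_smul, inv_mul_cancel₀ (by positivity), one_smul, sub_add_cancel]

theorem eps_ne_zero_of_injective {n : ℕ} {f : Fin n → Fin n} (hf : Function.Injective f) :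
    eps f ≠ 0 := by
  rw [eps, dif_pos (Finite.injective_iff_bijective.mp hf)]
  exact Units.ne_zero _

theorem eps_eq_zero_of_not_injective {n : ℕ} {f : Fin n → Fin n} (hf : ¬ Function.Injective f) :
    eps f = 0 :=
  dif_neg fun h => hf h.injective

theorem Fin.cons_succAbove_injective_iff {n : ℕ} {a b : Fin (n + 1)} :
    Function.Injective (Fin.cons b a.succAbove : Fin (n + 1) → Fin (n + 1)) ↔ b = a := by
  simp [Fin.cons_injective_iff, Fin.succAbove_right_injective]

theorem eps_cons_succAbove_ne_zero {n : ℕ} (a : Fin (n + 1)) :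
    (eps (Fin.cons a a.succAbove) : ℝ) ≠ 0 :=
  Int.cast_ne_zero.mpr (eps_ne_zero_of_injective (Fin.cons_succAbove_injective_iff.mpr rfl))

noncomputable def normalVector {n : ℕ} (L : (Fin n → ℝ) →L[ℝ] (Fin (n + 1) → ℝ))
    (a : Fin (n + 1)) : ℝ :=
  ∑ g : Fin n → Fin (n + 1), (eps (Fin.cons a g) : ℝ) * ∏ i, L (Pi.single i 1) (g i)

theorem continuous_normalVector {n : ℕ} : Continuous (normalVector (n := n)) := by
  unfold normalVector
  fun_prop

noncomputable def coordPlane {n : ℕ} (a : Fin (n + 1)) : (Fin n → ℝ) →L[ℝ] (Fin (n + 1) → ℝ) :=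
  LinearMap.toContinuousLinearMap
    (Matrix.toLin' (Matrix.of fun j i => if a.succAbove i = j then (1 : ℝ) else 0))

theorem coordPlane_single {n : ℕ} (a : Fin (n + 1)) (i : Fin n) :
    coordPlane a (Pi.single i 1) = Pi.single (a.succAbove i) 1 := by
  ext j
  simp [coordPlane, Pi.single_apply, eq_comm]

theorem normalVector_coordPlane {n : ℕ} (a : Fin (n + 1)) :
    normalVector (coordPlane a) = Pi.single a (eps (Fin.cons a a.succAbove) : ℝ) := by
  ext b
  have hprod : ∀ g : Fin n → Fin (n + 1),
      ∏ i, coordPlane a (Pi.single i 1) (g i) = if g = a.succAbove then 1 else 0 := by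
    intro g
    split_ifs with hg
    · simp [hg, coordPlane_single]
    · obtain ⟨i, hi⟩ := Function.ne_iff.mp hg
      exact Finset.prod_eq_zero (Finset.mem_univ i) (by simp [coordPlane_single, Ne.symm hi])
  simp only [normalVector, hprod, mul_ite, mul_one, mul_zero, Finset.sum_ite_eq', Finset.mem_univ,
    if_true, Pi.single_apply]
  split_ifs with hb
  · rw [hb]
  · exact_mod_cast eps_eq_zero_of_not_injective (Fin.cons_succAbove_injective_iff.not.mpr hb)

noncomputable def simplicityForm {d : ℕ} (M : Fin d → Fin (d + 4)) :
    (Fin (d + 4) → Fin (d + 4) → ℝ) →ₗ[ℝ] (Fin (d + 4) → Fin (d + 4) → ℝ) →ₗ[ℝ] ℝ :=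
  LinearMap.mk₂ ℝ
    (fun P Q => ∑ I, ∑ J, ∑ K, ∑ L, (eps (idx I J K L M) : ℝ) * (P I J * Q K L))
    (fun _ _ _ => by simp only [Pi.add_apply, add_mul, mul_add, Finset.sum_add_distrib])
    (fun _ _ _ => by
      simp only [Pi.smul_apply, smul_eq_mul, Finset.mul_sum, mul_left_comm, mul_assoc])
    (fun _ _ _ => by simp only [Pi.add_apply, mul_add, Finset.sum_add_distrib])
    (fun _ _ _ => by simp only [Pi.smul_apply, smul_eq_mul, Finset.mul_sum, mul_left_comm])

theorem simplicityForm_sum_mul_sum {d : ℕ} (M : Fin d → Fin (d + 4)) {ι κ : Type*}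
    (s : Finset ι) (t : Finset κ) (c : ι → ℝ) (c' : κ → ℝ)
    (P : ι → Fin (d + 4) → Fin (d + 4) → ℝ) (Q : κ → Fin (d + 4) → Fin (d + 4) → ℝ) :
    simplicityForm M (fun I J => ∑ a ∈ s, c a * P a I J) (fun K L => ∑ b ∈ t, c' b * Q b K L)
      = ∑ a ∈ s, ∑ b ∈ t, c a * c' b * simplicityForm M (P a) (Q b) := by
  have hP : (fun I J => ∑ a ∈ s, c a * P a I J) = ∑ a ∈ s, c a • P a := by
    ext I J
    simp only [Finset.sum_apply, Pi.smul_apply, smul_eq_mul]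
  have hQ : (fun K L => ∑ b ∈ t, c' b * Q b K L) = ∑ b ∈ t, c' b • Q b := by
    ext K L
    simp only [Finset.sum_apply, Pi.smul_apply, smul_eq_mul]
  rw [hP, hQ]
  simp only [map_sum, LinearMap.sum_apply, map_smul, LinearMap.smul_apply, smul_eq_mul,
    Finset.mul_sum, mul_assoc, mul_left_comm]
  rw [Finset.sum_comm]

theorem Filter.Tendsto.simplicityForm {d : ℕ} (M : Fin d → Fin (d + 4)) {α β : Type*}
    {l : Filter α} {l' : Filter β} {F : α → Fin (d + 4) → Fin (d + 4) → ℝ}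
    {G : β → Fin (d + 4) → Fin (d + 4) → ℝ} {P Q : Fin (d + 4) → Fin (d + 4) → ℝ}
    (hF : ∀ I J, Tendsto (fun s => F s I J) l (𝓝 (P I J)))
    (hG : ∀ K L, Tendsto (fun t => G t K L) l' (𝓝 (Q K L))) :
    Tendsto (fun p : α × β => simplicityForm M (F p.1) (G p.2)) (l ×ˢ l')
      (𝓝 (simplicityForm M P Q)) := by
  simp only [_root_.simplicityForm, LinearMap.mk₂_apply]
  exact tendsto_finsetSum _ fun I _ => tendsto_finsetSum _ fun J _ =>
    tendsto_finsetSum _ fun K _ => tendsto_finsetSum _ fun L _ =>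
      (((hF I J).comp tendsto_fst).mul ((hG K L).comp tendsto_snd)).const_mul _

theorem flux_eq_setIntegral_normalVector (d : ℕ)
    (π : Fin (d + 3) → Fin (d + 4) → Fin (d + 4) → (Fin (d + 3) → ℝ) → ℝ)
    (S : (Fin (d + 2) → ℝ) → Fin (d + 3) → ℝ)
    (dS : (Fin (d + 2) → ℝ) → ((Fin (d + 2) → ℝ) →L[ℝ] (Fin (d + 3) → ℝ)))
    (I J : Fin (d + 4)) (ε : ℝ) :
    flux d π S dS I J ε = ∫ u in univ.pi fun _ : Fin (d + 2) => Ioo (-(ε / 2)) (ε / 2),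
      ∑ a, normalVector (dS u) a * π a I J (S u) := by
  simp only [flux, normalVector, Finset.sum_mul]

theorem tendsto_rescaled_flux (d : ℕ)
    (π : Fin (d + 3) → Fin (d + 4) → Fin (d + 4) → (Fin (d + 3) → ℝ) → ℝ)
    (hπ : ∀ a I J, Continuous (π a I J))
    {S : (Fin (d + 2) → ℝ) → Fin (d + 3) → ℝ}
    {dS : (Fin (d + 2) → ℝ) → ((Fin (d + 2) → ℝ) →L[ℝ] (Fin (d + 3) → ℝ))}
    (hS : ContinuousOn S (cube d)) (hdS : ContinuousOn dS (cube d)) (I J : Fin (d + 4)) :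
    Tendsto (fun ε : ℝ => 1 / ε ^ (d + 2) * flux d π S dS I J ε) (𝓝[>] 0)
      (𝓝 (∑ a, normalVector (dS 0) a * π a I J (S 0))) := by
  have isOpen_cube : IsOpen (cube d) := isOpen_set_pi finite_univ fun _ _ => isOpen_Ioo
  have hcube : cube d ∈ 𝓝 0 := isOpen_cube.mem_nhds fun _ _ => by norm_num
  have hdens : ContinuousOn (fun u => ∑ a, normalVector (dS u) a * π a I J (S u)) (cube d) := by
    refine continuousOn_finsetSum _ fun a _ => ContinuousOn.mul ?_ ((hπ a I J).comp_continuousOn hS)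
    exact (continuous_apply a).comp_continuousOn (continuous_normalVector.comp_continuousOn hdS)
  have := tendsto_inv_pow_smul_setIntegral_pi_Ioo (hdens.continuousAt hcube)
    (hdens.stronglyMeasurableAtFilter isOpen_cube 0 (mem_of_mem_nhds hcube))
  simpa only [flux_eq_setIntegral_normalVector, one_div, smul_eq_mul] using this

theorem tendsto_rescaled_simplicityForm_flux (d : ℕ)
    (π : Fin (d + 3) → Fin (d + 4) → Fin (d + 4) → (Fin (d + 3) → ℝ) → ℝ)
    (hπ : ∀ a I J, Continuous (π a I J)) (M : Fin d → Fin (d + 4))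
    {S S' : (Fin (d + 2) → ℝ) → Fin (d + 3) → ℝ}
    {dS dS' : (Fin (d + 2) → ℝ) → ((Fin (d + 2) → ℝ) →L[ℝ] (Fin (d + 3) → ℝ))}
    (hS : ContinuousOn S (cube d)) (hdS : ContinuousOn dS (cube d))
    (hS' : ContinuousOn S' (cube d)) (hdS' : ContinuousOn dS' (cube d)) :
    Tendsto (fun p : ℝ × ℝ => 1 / (p.1 ^ (d + 2) * p.2 ^ (d + 2)) *
        simplicityForm M (fun I J => flux d π S dS I J p.1) (fun K L => flux d π S' dS' K L p.2))
      (𝓝[>] 0 ×ˢ 𝓝[>] 0)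
      (𝓝 (∑ a, ∑ b, normalVector (dS 0) a * normalVector (dS' 0) b *
        simplicityForm M (fun I J => π a I J (S 0)) (fun K L => π b K L (S' 0)))) := by
  have hlim := (Filter.Tendsto.simplicityForm M (tendsto_rescaled_flux d π hπ hS hdS)
    (tendsto_rescaled_flux d π hπ hS' hdS'))
  rw [simplicityForm_sum_mul_sum] at hlim
  refine hlim.congr fun p => ?_
  show simplicityForm M ((1 / p.1 ^ (d + 2)) • _) ((1 / p.2 ^ (d + 2)) • _) = _
  simp only [map_smul, LinearMap.smul_apply, smul_eq_mul]
  ring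

theorem simplicity_pointwise_iff_flux_general (d : ℕ)
    (π : Fin (d + 3) → Fin (d + 4) → Fin (d + 4) → (Fin (d + 3) → ℝ) → ℝ)
    (hcont : ∀ a I J, Continuous (π a I J)) :
    (∀ x : Fin (d + 3) → ℝ, ∀ a b : Fin (d + 3),
      ∀ M : Fin d → Fin (d + 4), StrictMono M →
        ∑ I : Fin (d + 4), ∑ J : Fin (d + 4), ∑ K : Fin (d + 4), ∑ L : Fin (d + 4),
          (eps (idx I J K L M) : ℝ) * (π a I J x * π b K L x) = 0)
    ↔
    (∀ x : Fin (d + 3) → ℝ, ∀ M : Fin d → Fin (d + 4), StrictMono M →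
      ∀ (S S' : (Fin (d + 2) → ℝ) → Fin (d + 3) → ℝ)
        (dS dS' : (Fin (d + 2) → ℝ) → ((Fin (d + 2) → ℝ) →L[ℝ] (Fin (d + 3) → ℝ))),
        S 0 = x → S' 0 = x →
        (∀ u ∈ cube d, HasFDerivAt S (dS u) u) → ContinuousOn dS (cube d) →
        (∀ u ∈ cube d, HasFDerivAt S' (dS' u) u) → ContinuousOn dS' (cube d) →
        Tendsto (fun p : ℝ × ℝ =>
            (1 / (p.1 ^ (d + 2) * p.2 ^ (d + 2))) *
              ∑ I : Fin (d + 4), ∑ J : Fin (d + 4), ∑ K : Fin (d + 4), ∑ L : Fin (d + 4),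
                (eps (idx I J K L M) : ℝ) *
                  (flux d π S dS I J p.1 * flux d π S' dS' K L p.2))
          ((nhdsWithin 0 (Set.Ioi 0)) ×ˢ (nhdsWithin 0 (Set.Ioi 0)))
          (nhds 0)) := by
  refine ⟨fun hpt x M hM S S' dS dS' hS0 hS'0 hS hdS hS' hdS' => ?_, fun hflux x a b M hM => ?_⟩
  · have hlim := tendsto_rescaled_simplicityForm_flux d π hcont M
      (fun u hu => (hS u hu).continuousAt.continuousWithinAt) hdS
      (fun u hu => (hS' u hu).continuousAt.continuousWithinAt) hdS'
    rw [hS0, hS'0] at hlim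
    have hpt' : ∀ a b, simplicityForm M (fun I J => π a I J x) (fun K L => π b K L x) = 0 :=
      fun a b => hpt x a b M hM
    simp only [hpt', mul_zero, Finset.sum_const_zero] at hlim
    exact hlim
  · have hflat : ∀ c u, HasFDerivAt (fun u => x + coordPlane c u) (coordPlane c) u :=
      fun c u => (coordPlane c).hasFDerivAt.const_add x
    have hflat_cont : ∀ c, ContinuousOn (fun u => x + coordPlane c u) (cube d) :=
      fun c => (continuous_const.add (coordPlane c).continuous).continuousOn
    have hgiven := hflux x M hM _ _ _ _ (by simp) (by simp) (fun u _ => hflat a u)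
      continuousOn_const (fun u _ => hflat b u) continuousOn_const
    have hlim := tendsto_rescaled_simplicityForm_flux d π hcont M (dS := fun _ => coordPlane a)
      (dS' := fun _ => coordPlane b) (hflat_cont a) continuousOn_const (hflat_cont b)
      continuousOn_const
    simp only [normalVector_coordPlane, map_zero, add_zero, Pi.single_apply, ite_mul, mul_ite,
      zero_mul, mul_zero, Finset.sum_ite_eq', Finset.mem_univ, if_true] at hlim
    have hzero := tendsto_nhds_unique hlim hgiven
    exact (mul_eq_zero.mp hzero).resolve_left
      (mul_ne_zero (eps_cons_succAbove_ne_zero a) (eps_cons_succAbove_ne_zero b))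

/-- Let `D = d + 3 ≥ 3` and let `π^{aIJ}` be continuous fields on `ℝ^D`, antisymmetric
in the internal indices. Then the pointwise quadratic simplicity constraint
`Σ ε_{IJKLM₁…M_{D−3}} π^{aIJ}(x) π^{bKL}(x) = 0` (for all `x`, all `a, b` and all
increasing tuples `M₁ < ⋯ < M_{D−3}`) holds if and only if its smeared version holds:
for all `x`, all increasing tuples and all pairs of continuously differentiable surfaces
`S, S'` through `x`, the rescaled contraction of fluxes
`ε^{1−D} ε'^{1−D} Σ ε_{IJKLM̄} π^{IJ}(S_ε) π^{KL}(S'_{ε'})` tends to `0` as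
`ε, ε' → 0⁺`. -/
theorem simplicity_pointwise_iff_flux (d : ℕ)
    (π : Fin (d + 3) → Fin (d + 4) → Fin (d + 4) → (Fin (d + 3) → ℝ) → ℝ)
    (hcont : ∀ a I J, Continuous (π a I J))
    (hanti : ∀ a I J x, π a J I x = - π a I J x) :
    (∀ x : Fin (d + 3) → ℝ, ∀ a b : Fin (d + 3),
      ∀ M : Fin d → Fin (d + 4), StrictMono M →
        ∑ I : Fin (d + 4), ∑ J : Fin (d + 4), ∑ K : Fin (d + 4), ∑ L : Fin (d + 4),
          (eps (idx I J K L M) : ℝ) * (π a I J x * π b K L x) = 0)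
    ↔
    (∀ x : Fin (d + 3) → ℝ, ∀ M : Fin d → Fin (d + 4), StrictMono M →
      ∀ (S S' : (Fin (d + 2) → ℝ) → Fin (d + 3) → ℝ)
        (dS dS' : (Fin (d + 2) → ℝ) → ((Fin (d + 2) → ℝ) →L[ℝ] (Fin (d + 3) → ℝ))),
        S 0 = x → S' 0 = x →
        (∀ u ∈ cube d, HasFDerivAt S (dS u) u) → ContinuousOn dS (cube d) →
        (∀ u ∈ cube d, HasFDerivAt S' (dS' u) u) → ContinuousOn dS' (cube d) →
        Tendsto (fun p : ℝ × ℝ =>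
            (1 / (p.1 ^ (d + 2) * p.2 ^ (d + 2))) *
              ∑ I : Fin (d + 4), ∑ J : Fin (d + 4), ∑ K : Fin (d + 4), ∑ L : Fin (d + 4),
                (eps (idx I J K L M) : ℝ) *
                  (flux d π S dS I J p.1 * flux d π S' dS' K L p.2))
          ((nhdsWithin 0 (Set.Ioi 0)) ×ˢ (nhdsWithin 0 (Set.Ioi 0)))
          (nhds 0)) :=
  simplicity_pointwise_iff_flux_general d π hcont
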